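/- Let R be a Noetherian commutative ring that is locally approximately Gorenstein, and let f ∈ R[x₁,…,xₙ] be a polynomial that is Gaussian over R (i.e., c(fg) = c(f)·c(g) for all g ∈ R[x₁,…,xₙ], where c denotes the ideal of R generated by the coefficients). Then c(f) is locally principal. -/

import Mathlib

/-- An Artinian local ring is Gorenstein iff its socle (the annihilator of the maximal
ideal) is one-dimensional over the residue field, i.e. generated by one nonzero element. -/
def IsArtinianGorensteinLocal (A : Type*) [CommRing A] : Prop :=
  IsArtinianRing A ∧ ∃ h : IsLocalRing A, ∃ x : A, x ≠ 0 ∧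
    Submodule.annihilator (@IsLocalRing.maximalIdeal A _ h) = Ideal.span {x}

/-- A Noetherian local ring `(A,m)` is approximately Gorenstein if for every `N` there is
an `m`-primary ideal `I ⊆ m^N` such that `A/I` is Gorenstein. -/
def IsApproximatelyGorenstein (A : Type*) [CommRing A] [IsLocalRing A] : Prop :=
  ∀ N : ℕ, ∃ I : Ideal A, I ≤ IsLocalRing.maximalIdeal A ^ N ∧ I.IsPrimary ∧
    I.radical = IsLocalRing.maximalIdeal A ∧ IsArtinianGorensteinLocal (A ⧸ I)

/-- `R` is locally approximately Gorenstein if each localization at a maximal ideal is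
approximately Gorenstein. -/
def IsLocallyApproximatelyGorenstein (R : Type*) [CommRing R] : Prop :=
  ∀ (m : Ideal R) (_ : m.IsMaximal),
    IsApproximatelyGorenstein (Localization m.primeCompl)

/-- The content of a multivariate polynomial: the ideal of `R` generated by its
coefficients. -/
noncomputable def polyContent {R : Type*} [CommRing R] {n : ℕ}
    (f : MvPolynomial (Fin n) R) : Ideal R :=
  Ideal.span (Set.range fun d => MvPolynomial.coeff d f)

/-!
Localization preserves the Gaussian property, so we may assume `R` local with maximal ideal `m`;
put `I = c(f)`. By Artin–Rees, `m^N ⊓ I ≤ m I` for some `N`, so by Nakayama it suffices that `I`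
becomes principal modulo some `K ≤ m^N` with `R/K` Artinian Gorenstein, over which `f` is still
Gaussian.

Over an Artinian local ring `A` with socle `(z)`, multiplication by an element `x` with `m x ⊆ J`
maps `0 : J` to the socle, so lengths along covers give `ℓ(0 : J) + ℓ(J) = ℓ(A)`, whence
`0 : (0 : J) = J`. Let `B = 0 : m I`, `C = 0 : I` and pick `b₁ ∈ B \ C`. For `b ∈ B` every
coefficient of `b f` lies in the socle, so `b f = z h`. Given `b₂ ∈ B`, the polynomial
`g = b₁ h₂ - b₂ h₁` satisfies `f g = 0`, hence `I c(g) = 0`; reading off a coefficient at which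
`h₁` is a unit gives `b₂ ∈ C + (b₁)`. Dualizing `B = C + (b₁)` gives `m I = I ∩ (0 : b₁)`, so
`a ↦ a b₁` embeds `I / m I` into the one-dimensional socle and `I` is principal.
-/

open IsLocalRing Submodule MvPolynomial

theorem monotone_of_forall_covBy_le {α β : Type*} [PartialOrder α] [WellFoundedGT α]
    [IsStronglyAtomic α] [Preorder β] {f : α → β} (hf : ∀ a b, a ⋖ b → f a ≤ f b) :
    Monotone f := by
  intro a b hab
  induction a using WellFoundedGT.induction with
  | _ a ih =>
    rcases hab.eq_or_lt with rfl | hlt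
    · exact le_rfl
    · obtain ⟨c, hac, hcb⟩ := exists_covBy_le_of_lt hlt
      exact (hf a c hac).trans (ih c hac.lt hcb)

theorem Submodule.length_eq_add_one_of_covBy {R M : Type*} [Ring R] [AddCommGroup M]
    [Module R M] {p q : Submodule R M} (h : p ⋖ q) :
    Module.length R q = Module.length R p + 1 := by
  rw [Module.length_eq_add_of_exact _ _ (subtype_injective _) (mkQ_surjective _)
    (LinearMap.exact_subtype_mkQ (p.comap q.subtype)), (comapSubtypeEquivOfLe h.le).length_eq,
    Module.length_eq_one_iff.2 ((covBy_iff_quot_is_simple h.le).1 h)]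

theorem Ideal.le_annihilator_annihilator {R : Type*} [CommRing R] (J : Ideal R) :
    J ≤ J.annihilator.annihilator := fun x hx =>
  mem_annihilator.2 fun b hb => by rw [smul_eq_mul, mul_comm]; exact mem_annihilator.1 hb x hx

theorem Ideal.exists_pow_inf_le_mul {R : Type*} [CommRing R] [IsNoetherianRing R]
    (J I : Ideal R) : ∃ N, J ^ N ⊓ I ≤ J * I := by
  obtain ⟨k, hk⟩ := Ideal.exists_pow_inf_eq_pow_smul J I
  refine ⟨k + 1, ?_⟩
  have := hk (k + 1) k.le_succ
  rw [smul_eq_mul, Ideal.mul_top, Nat.add_sub_cancel_left, pow_one] at this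
  rw [this]
  exact smul_mono_right _ inf_le_right

section LocalRing

variable {R M : Type*} [CommRing R] [IsLocalRing R] [AddCommGroup M] [Module R M]

theorem length_span_singleton_le_one {x : M} (hx : ∀ c ∈ maximalIdeal R, c • x = 0) :
    Module.length R (R ∙ x) ≤ 1 := by
  rw [← (Ideal.quotTorsionOfEquivSpanSingleton R M x).length_eq, Module.length_quotient]
  calc Order.coheight (Ideal.torsionOf R M x)
      ≤ Order.coheight (maximalIdeal R) := Order.coheight_anti fun c hc => hx c hc
    _ = 1 := by
      rw [← Module.length_quotient, Module.length_eq_one_iff, isSimpleModule_iff_isCoatom]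
      exact Ideal.isMaximal_def.mp (maximalIdeal.isMaximal R)

theorem Submodule.smul_mem_of_covBy {p q : Submodule R M} (h : p ⋖ q) {c : R}
    (hc : c ∈ maximalIdeal R) {x : M} (hx : x ∈ q) : c • x ∈ p := by
  have := (covBy_iff_quot_is_simple h.le).1 h
  rw [← eq_maximalIdeal
    (IsSimpleModule.annihilator_isMaximal (M := q ⧸ p.comap q.subtype))] at hc
  have := Module.mem_annihilator.1 hc (Submodule.Quotient.mk ⟨x, hx⟩)
  rwa [← Submodule.Quotient.mk_smul, Submodule.Quotient.mk_eq_zero] at this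

theorem Ideal.isPrincipal_of_le_span_sup_mul [IsNoetherianRing R] {I : Ideal R} {a : R}
    (ha : a ∈ I) (h : I ≤ Ideal.span {a} ⊔ maximalIdeal R * I) : I.IsPrincipal :=
  ⟨a, le_antisymm (le_of_le_smul_of_le_jacobson_bot (IsNoetherian.noetherian I)
    (maximalIdeal_le_jacobson ⊥) h) ((Ideal.span_singleton_le_iff_mem I).2 ha)⟩

end LocalRing

section Socle

variable {A : Type*} [CommRing A] [IsLocalRing A] {z : A}

theorem mul_eq_zero_of_annihilator_eq_span (hz : (maximalIdeal A).annihilator = Ideal.span {z})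
    {c : A} (hc : c ∈ maximalIdeal A) : c * z = 0 := by
  rw [mul_comm]
  exact mem_annihilator.1 (hz ▸ Ideal.mem_span_singleton_self z) c hc

theorem length_annihilator_le_of_covBy (hz : (maximalIdeal A).annihilator = Ideal.span {z})
    {J J' : Ideal A} (h : J ⋖ J') :
    Module.length A J.annihilator ≤ Module.length A J'.annihilator + 1 := by
  obtain ⟨x, hxJ', hxJ⟩ := SetLike.exists_of_lt h.lt
  have hJ' : J' = J ⊔ Ideal.span {x} := by
    refine ((h.eq_or_eq le_sup_left (sup_le h.le ?_)).resolve_left fun heq => hxJ ?_).symm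
    · exact (Ideal.span_singleton_le_iff_mem _).2 hxJ'
    · exact heq ▸ mem_sup_right (Ideal.mem_span_singleton_self x)
  let φ : J.annihilator →ₗ[A] A := LinearMap.toSpanSingleton A A x ∘ₗ J.annihilator.subtype
  have hker : LinearMap.ker φ = Submodule.comap J.annihilator.subtype J'.annihilator := by
    ext b
    simp [φ, hJ', Submodule.annihilator_sup]
  have hrange : LinearMap.range φ ≤ Ideal.span {z} := by
    rintro _ ⟨b, rfl⟩
    rw [← hz, mem_annihilator]
    intro c hc
    have := mem_annihilator.1 b.2 _ (smul_mem_of_covBy h hc hxJ')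
    simp only [φ, LinearMap.comp_apply, subtype_apply, LinearMap.toSpanSingleton_apply,
      smul_eq_mul] at this ⊢
    linear_combination this
  calc Module.length A J.annihilator
      = Module.length A (LinearMap.ker φ) + Module.length A (LinearMap.range φ) := by
        rw [Module.length_eq_add_of_exact _ _ (subtype_injective _) (mkQ_surjective _)
          (LinearMap.exact_subtype_mkQ (LinearMap.ker φ)), φ.quotKerEquivRange.length_eq]
    _ ≤ Module.length A J'.annihilator + 1 := by
      gcongr
      · rw [hker, (comapSubtypeEquivOfLe (annihilator_mono h.le)).length_eq]
      · exact (Module.length_le_of_injective _ (inclusion_injective hrange)).trans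
          (length_span_singleton_le_one fun _ => mul_eq_zero_of_annihilator_eq_span hz)

theorem mul_mem_span_of_mem_annihilator_mul (hz : (maximalIdeal A).annihilator = Ideal.span {z})
    {I : Ideal A} {a b : A} (ha : a ∈ I) (hb : b ∈ (maximalIdeal A * I).annihilator) :
    a * b ∈ Ideal.span {z} := by
  rw [← hz, mem_annihilator]
  intro c hc
  have := mem_annihilator.1 hb _ (Ideal.mul_mem_mul hc ha)
  simp only [smul_eq_mul] at this ⊢
  linear_combination this

theorem isPrincipal_of_inf_annihilator_le [IsNoetherianRing A]
    (hz : (maximalIdeal A).annihilator = Ideal.span {z}) {I : Ideal A} {b : A}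
    (hb : ∀ a ∈ I, a * b ∈ Ideal.span {z})
    (hker : I ⊓ (Ideal.span {b}).annihilator ≤ maximalIdeal A * I) : I.IsPrincipal := by
  by_cases hI : I ≤ maximalIdeal A * I
  · exact Ideal.isPrincipal_of_le_span_sup_mul I.zero_mem (hI.trans le_sup_right)
  obtain ⟨a, haI, ha⟩ := SetLike.not_le_iff_exists.1 hI
  obtain ⟨c, hc⟩ := Ideal.mem_span_singleton'.1 (hb a haI)
  have hcu : IsUnit c := by
    by_contra hcu
    refine ha (hker (mem_inf.2 ⟨haI, ?_⟩))
    rw [mem_annihilator_span_singleton, smul_eq_mul, ← hc,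
      mul_eq_zero_of_annihilator_eq_span hz ((mem_maximalIdeal c).2 hcu)]
  refine Ideal.isPrincipal_of_le_span_sup_mul haI fun a' ha'I => ?_
  obtain ⟨c', hc'⟩ := Ideal.mem_span_singleton'.1 (hb a' ha'I)
  have hdiff : c * a' - c' * a ∈ maximalIdeal A * I := by
    refine hker (mem_inf.2 ⟨sub_mem (I.mul_mem_left _ ha'I) (I.mul_mem_left _ haI), ?_⟩)
    rw [mem_annihilator_span_singleton, smul_eq_mul]
    linear_combination c' * hc - c * hc'
  rw [← Ideal.unit_mul_mem_iff_mem _ hcu, ← sub_add_cancel (c * a') (c' * a)]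
  exact add_mem (mem_sup_right hdiff)
    (mem_sup_left (Ideal.mul_mem_left _ _ (Ideal.mem_span_singleton_self a)))

variable [IsArtinianRing A]

theorem length_annihilator_add_length (hz : (maximalIdeal A).annihilator = Ideal.span {z})
    (J : Ideal A) : Module.length A J.annihilator + Module.length A J = Module.length A A := by
  have hmono : Monotone fun J : Ideal A => Module.length A J.annihilator + Module.length A J :=
    monotone_of_forall_covBy_le fun J J' h => by
      rw [length_eq_add_one_of_covBy h, ← add_assoc, add_right_comm]
      gcongr
      exact length_annihilator_le_of_covBy hz h
  refine le_antisymm ((hmono le_top).trans_eq ?_) ((hmono bot_le).trans_eq' ?_)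
  · dsimp only
    rw [annihilator_top, Module.annihilator_eq_bot.2 inferInstance, Module.length_bot, zero_add,
      Module.length_top]
  · dsimp only
    rw [annihilator_bot, Module.length_top, Module.length_bot, add_zero]

theorem annihilator_annihilator (hz : (maximalIdeal A).annihilator = Ideal.span {z})
    (J : Ideal A) : J.annihilator.annihilator = J := by
  have hlen : Module.length A J.annihilator.annihilator = Module.length A J := by
    rw [← (ENat.addLECancellable_of_ne_top
        (Module.length_ne_top (R := A) (M := J.annihilator))).inj_left,
      length_annihilator_add_length hz, add_comm, length_annihilator_add_length hz]
  refine ((Ideal.le_annihilator_annihilator J).eq_of_not_lt fun hlt => ?_).symm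
  have := Submodule.height_strictMono hlt
  rw [← Module.length_submodule, ← Module.length_submodule, hlen] at this
  exact this.false

theorem annihilator_strictAnti (hz : (maximalIdeal A).annihilator = Ideal.span {z}) :
    StrictAnti fun J : Ideal A => J.annihilator := fun K L hKL =>
  (annihilator_mono hKL.le).lt_of_ne fun h =>
    hKL.ne (by rw [← annihilator_annihilator hz K, ← annihilator_annihilator hz L, h])

end Socle

section Content

variable {R S : Type*} [CommRing R] [CommRing S] {n : ℕ}

def IsGaussian (f : MvPolynomial (Fin n) R) : Prop :=
  ∀ g, polyContent (f * g) = polyContent f * polyContent g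

theorem coeff_mem_polyContent (f : MvPolynomial (Fin n) R) (d : Fin n →₀ ℕ) :
    coeff d f ∈ polyContent f :=
  Ideal.subset_span ⟨d, rfl⟩

theorem polyContent_le_iff {f : MvPolynomial (Fin n) R} {I : Ideal R} :
    polyContent f ≤ I ↔ ∀ d, coeff d f ∈ I := by
  simp [polyContent, Ideal.span_le, Set.range_subset_iff]

theorem mem_annihilator_polyContent_iff {f : MvPolynomial (Fin n) R} {b : R} :
    b ∈ (polyContent f).annihilator ↔ ∀ d, b * coeff d f = 0 := by
  simp [polyContent, Submodule.mem_annihilator_span]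

theorem polyContent_zero : polyContent (0 : MvPolynomial (Fin n) R) = ⊥ := by
  simp [polyContent]

theorem polyContent_map (φ : R →+* S) (f : MvPolynomial (Fin n) R) :
    polyContent (map φ f) = (polyContent f).map φ := by
  simp only [polyContent, Ideal.map_span, ← Set.range_comp, Function.comp_def, coeff_map]

theorem polyContent_C_mul_of_isUnit (f : MvPolynomial (Fin n) R) {u : R} (hu : IsUnit u) :
    polyContent (C u * f) = polyContent f := by
  refine le_antisymm (polyContent_le_iff.2 fun d => ?_) (polyContent_le_iff.2 fun d => ?_)
  · rw [coeff_C_mul]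
    exact Ideal.mul_mem_left _ _ (coeff_mem_polyContent f d)
  · rw [← Ideal.unit_mul_mem_iff_mem _ hu, ← coeff_C_mul]
    exact coeff_mem_polyContent _ d

theorem exists_eq_C_mul_of_coeff_mem_span {p : MvPolynomial (Fin n) R} {z : R}
    (h : ∀ d, coeff d p ∈ Ideal.span {z}) : ∃ q, p = C z * q := by
  rw [← mem_map_C_iff, Ideal.map_span, Set.image_singleton] at h
  obtain ⟨q, hq⟩ := Ideal.mem_span_singleton'.1 h
  exact ⟨q, by rw [← hq, mul_comm]⟩

theorem IsGaussian.map_of_surjective {f : MvPolynomial (Fin n) R} (hf : IsGaussian f)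
    {φ : R →+* S} (hφ : Function.Surjective φ) : IsGaussian (map φ f) := by
  intro g
  obtain ⟨g, rfl⟩ := map_surjective φ hφ g
  rw [← map_mul, polyContent_map, polyContent_map, polyContent_map, hf, Ideal.map_mul]

attribute [local instance] algebraMvPolynomial in
theorem IsGaussian.map_localization {f : MvPolynomial (Fin n) R} (hf : IsGaussian f)
    (M : Submonoid R) [Algebra R S] [IsLocalization M S] :
    IsGaussian (map (algebraMap R S) f) := by
  intro g
  obtain ⟨⟨g₀, _, b, hb, rfl⟩, hg⟩ := IsLocalization.surj (M.map (C (σ := Fin n))) g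
  simp only [algebraMap_def, map_C] at hg
  have hu : IsUnit (algebraMap R S b) := IsLocalization.map_units S ⟨b, hb⟩
  calc polyContent (map (algebraMap R S) f * g)
      = polyContent (C (algebraMap R S b) * (map (algebraMap R S) f * g)) :=
        (polyContent_C_mul_of_isUnit _ hu).symm
    _ = polyContent (map (algebraMap R S) (f * g₀)) := by rw [map_mul, ← hg]; ring_nf
    _ = polyContent (map (algebraMap R S) f) * polyContent (C (algebraMap R S b) * g) := by
        rw [polyContent_map, hf, Ideal.map_mul, ← polyContent_map, ← polyContent_map, ← hg,
          mul_comm g]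
    _ = polyContent (map (algebraMap R S) f) * polyContent g := by
        rw [polyContent_C_mul_of_isUnit _ hu]

end Content

section Gorenstein

variable {A : Type*} [CommRing A] [IsLocalRing A] {n : ℕ} {f : MvPolynomial (Fin n) A}

theorem IsGaussian.mem_annihilator_sup_span (hf : IsGaussian f) {z : A}
    (hz : (maximalIdeal A).annihilator = Ideal.span {z}) {b₁ b₂ : A}
    (hb₁ : b₁ ∈ (maximalIdeal A * polyContent f).annihilator)
    (hb₂ : b₂ ∈ (maximalIdeal A * polyContent f).annihilator)
    (hb₁f : b₁ ∉ (polyContent f).annihilator) :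
    b₂ ∈ (polyContent f).annihilator ⊔ Ideal.span {b₁} := by
  have hdiv : ∀ b ∈ (maximalIdeal A * polyContent f).annihilator, ∃ h, C b * f = C z * h :=
    fun b hb => exists_eq_C_mul_of_coeff_mem_span fun d => by
      rw [coeff_C_mul, mul_comm]
      exact mul_mem_span_of_mem_annihilator_mul hz (coeff_mem_polyContent f d) hb
  obtain ⟨h₁, e₁⟩ := hdiv b₁ hb₁
  obtain ⟨h₂, e₂⟩ := hdiv b₂ hb₂
  set g := C b₁ * h₂ - C b₂ * h₁
  have hfg : f * g = 0 := by linear_combination h₂ * e₁ - h₁ * e₂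
  have hg : polyContent g ≤ (polyContent f).annihilator := by
    rw [le_annihilator_iff, smul_eq_mul, mul_comm, ← hf, hfg, polyContent_zero]
  obtain ⟨d, hd⟩ : ∃ d, b₁ * coeff d f ≠ 0 := by
    simpa [mem_annihilator_polyContent_iff] using hb₁f
  have hu : IsUnit (coeff d h₁) := by
    by_contra hu
    refine hd ?_
    rw [← coeff_C_mul, e₁, coeff_C_mul, mul_comm,
      mul_eq_zero_of_annihilator_eq_span hz ((mem_maximalIdeal _).2 hu)]
  rw [← Ideal.mul_unit_mem_iff_mem _ hu]
  have : b₂ * coeff d h₁ = b₁ * coeff d h₂ - coeff d g := by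
    simp only [g, coeff_sub, coeff_C_mul]; ring
  rw [this]
  exact sub_mem (mem_sup_right (Ideal.mul_mem_right _ _ (Ideal.mem_span_singleton_self b₁)))
    (mem_sup_left (hg (coeff_mem_polyContent g d)))

theorem IsGaussian.isPrincipal_polyContent_of_annihilator_eq_span [IsArtinianRing A]
    (hf : IsGaussian f) {z : A} (hz : (maximalIdeal A).annihilator = Ideal.span {z}) :
    (polyContent f).IsPrincipal := by
  by_cases hI : polyContent f ≤ maximalIdeal A * polyContent f
  · exact Ideal.isPrincipal_of_le_span_sup_mul (zero_mem _) (hI.trans le_sup_right)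
  have hlt : maximalIdeal A * polyContent f < polyContent f :=
    lt_of_le_not_ge Ideal.mul_le_right hI
  obtain ⟨b, hb, hbI⟩ := SetLike.exists_of_lt (annihilator_strictAnti hz hlt)
  have hann : (maximalIdeal A * polyContent f).annihilator =
      (polyContent f).annihilator ⊔ Ideal.span {b} :=
    le_antisymm (fun b' hb' => hf.mem_annihilator_sup_span hz hb hb' hbI)
      (sup_le (annihilator_mono Ideal.mul_le_right) ((Ideal.span_singleton_le_iff_mem _).2 hb))
  refine isPrincipal_of_inf_annihilator_le hz
    (fun a ha => mul_mem_span_of_mem_annihilator_mul hz ha hb) ?_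
  rw [← annihilator_annihilator hz (maximalIdeal A * polyContent f), hann, annihilator_sup,
    annihilator_annihilator hz]

theorem IsGaussian.isPrincipal_polyContent_of_isApproximatelyGorenstein [IsNoetherianRing A]
    (hA : IsApproximatelyGorenstein A) (hf : IsGaussian f) : (polyContent f).IsPrincipal := by
  set I := polyContent f
  obtain ⟨N, hN⟩ := Ideal.exists_pow_inf_le_mul (maximalIdeal A) I
  obtain ⟨K, hKN, -, -, hart, hloc, x, -, hx⟩ := hA N
  obtain ⟨⟨y, hy⟩⟩ := (hf.map_of_surjective Ideal.Quotient.mk_surjective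
    ).isPrincipal_polyContent_of_annihilator_eq_span (A := A ⧸ K) hx
  rw [polyContent_map] at hy
  obtain ⟨a, haI, rfl⟩ := (Ideal.mem_map_iff_of_surjective _ Ideal.Quotient.mk_surjective).1
    (hy.ge (Ideal.mem_span_singleton_self y))
  have hIK : I ≤ Ideal.span {a} ⊔ K := by
    have hmap : I.map (Ideal.Quotient.mk K) = (Ideal.span {a}).map (Ideal.Quotient.mk K) := by
      rw [hy, Ideal.map_span, Set.image_singleton]
    have := congrArg (Ideal.comap (Ideal.Quotient.mk K)) hmap
    simp only [Ideal.comap_map_of_surjective' _ Ideal.Quotient.mk_surjective, Ideal.mk_ker] at this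
    exact this ▸ le_sup_left
  refine Ideal.isPrincipal_of_le_span_sup_mul haI ?_
  calc I = (Ideal.span {a} ⊔ K) ⊓ I := (inf_eq_right.2 hIK).symm
    _ = Ideal.span {a} ⊔ K ⊓ I :=
        sup_inf_assoc_of_le _ ((Ideal.span_singleton_le_iff_mem _).2 haI)
    _ ≤ Ideal.span {a} ⊔ maximalIdeal A * I :=
        sup_le_sup_left ((inf_le_inf_right _ hKN).trans hN) _

end Gorenstein

/-- Let `R` be Noetherian and locally approximately Gorenstein.  If
`f ∈ R[x₁,…,xₙ]` is Gaussian over `R`, then `c(f)` is locally principal. -/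
theorem locally_principal_content_of_gaussian_poly (R : Type*) [CommRing R]
    [IsNoetherianRing R] (hag : IsLocallyApproximatelyGorenstein R) (n : ℕ)
    (f : MvPolynomial (Fin n) R)
    (hf : ∀ g : MvPolynomial (Fin n) R,
      polyContent (f * g) = polyContent f * polyContent g) :
    ∀ (m : Ideal R) (_ : m.IsMaximal),
      (Ideal.map (algebraMap R (Localization m.primeCompl)) (polyContent f)).IsPrincipal := by
  intro m hm
  rw [← polyContent_map]
  exact (IsGaussian.map_localization hf m.primeCompl
    ).isPrincipal_polyContent_of_isApproximatelyGorenstein (hag m hm)
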